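/- Upper tail bound via the worst-case variance proxy: for every t > 0, μ{x : f(x) − E[f] > t} ≤ exp( −t² / (2·‖Df‖_∞) ), where Df = Σ_{k=1}^n (f − inf_k f)² and ‖·‖_∞ is the essential supremum norm. -/

import Mathlib

open MeasureTheory Real

section ProductSpace

variable {n : ℕ} {Ω : Fin n → Type*} [∀ k, MeasurableSpace (Ω k)]

/-- Thermal expectation `E_{βf}[g] = E[g e^{βf}] / E[e^{βf}]`. -/
noncomputable def thermalExp {α : Type*} [MeasurableSpace α] (ν : Measure α)
    (β : ℝ) (f g : α → ℝ) : ℝ :=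
  (∫ x, g x * Real.exp (β * f x) ∂ν) / ∫ x, Real.exp (β * f x) ∂ν

/-- Canonical entropy `S_f(β) = β E_{βf}[f] − ln Z_{βf}`. -/
noncomputable def canEntropy {α : Type*} [MeasurableSpace α] (ν : Measure α)
    (f : α → ℝ) (β : ℝ) : ℝ :=
  β * thermalExp ν β f f - Real.log (∫ x, Real.exp (β * f x) ∂ν)

/-- Conditional expectation `E_k[g](x) = ∫ g(x_{y,k}) dμ_k(y)`. -/
noncomputable def condExpK (μ : ∀ k, Measure (Ω k)) (k : Fin n)
    (g : (∀ i, Ω i) → ℝ) (x : ∀ i, Ω i) : ℝ :=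
  ∫ y, g (Function.update x k y) ∂(μ k)

/-- Conditional thermal expectation `E_{k,βf}[g](x) = E_k[g e^{βf}](x) / E_k[e^{βf}](x)`. -/
noncomputable def condThermalExpK (μ : ∀ k, Measure (Ω k)) (k : Fin n) (β : ℝ)
    (f g : (∀ i, Ω i) → ℝ) (x : ∀ i, Ω i) : ℝ :=
  (∫ y, g (Function.update x k y) * Real.exp (β * f (Function.update x k y)) ∂(μ k)) /
    ∫ y, Real.exp (β * f (Function.update x k y)) ∂(μ k)

/-- Conditional entropy `S_{k,f}(β)(x) = β E_{k,βf}[f](x) − ln Z_{k,βf}(x)`. -/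
noncomputable def condEntropyK (μ : ∀ k, Measure (Ω k)) (k : Fin n)
    (f : (∀ i, Ω i) → ℝ) (β : ℝ) (x : ∀ i, Ω i) : ℝ :=
  β * condThermalExpK μ k β f f x -
    Real.log (∫ y, Real.exp (β * f (Function.update x k y)) ∂(μ k))

/-- Conditional variance `σ²_k[g](x) = E_k[(g − E_k[g])²](x)`. -/
noncomputable def condVarK (μ : ∀ k, Measure (Ω k)) (k : Fin n)
    (g : (∀ i, Ω i) → ℝ) (x : ∀ i, Ω i) : ℝ :=
  ∫ y, (g (Function.update x k y) - condExpK μ k g x) ^ 2 ∂(μ k)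

/-- Conditional supremum `(sup_k g)(x) = sup_{y} g(x_{y,k})`. -/
noncomputable def condSupK (k : Fin n) (g : (∀ i, Ω i) → ℝ) (x : ∀ i, Ω i) : ℝ :=
  ⨆ y : Ω k, g (Function.update x k y)

/-- Conditional infimum `(inf_k g)(x) = inf_{y} g(x_{y,k})`. -/
noncomputable def condInfK (k : Fin n) (g : (∀ i, Ω i) → ℝ) (x : ∀ i, Ω i) : ℝ :=
  ⨅ y : Ω k, g (Function.update x k y)

/-- Worst-case variance proxy `Dg = Σ_k (g − inf_k g)²`. -/
noncomputable def Dproxy (g : (∀ i, Ω i) → ℝ) (x : ∀ i, Ω i) : ℝ :=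
  ∑ k, (g x - condInfK k g x) ^ 2

end ProductSpace

/-!
Entropy method. Write `Ent(g) = E[g log g] - E[g] log E[g]`. The entropy of `e^{λf}` under the
product measure is at most the sum over `k` of the expected entropies in the `k`-th coordinate:
averaging `U = e^{λf}` over one more coordinate at a time gives a telescoping decomposition of
`Ent(U)`, and each term is bounded by the duality `E[U h] ≤ Ent(U)` for `E[e^h] = 1`. In one
coordinate, with `a ≤ f` the conditional infimum, `e^{-u} ≤ 1 - u + u²/2` gives
`Ent_k(e^{λf}) ≤ λ²/2 E_k[(f - a)² e^{λf}]`; summing, `Ent(e^{λf}) ≤ λ²/2 ‖Df‖_∞ E[e^{λf}]`.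
Herbst's argument turns this into `log E[e^{λf}] ≤ λ E[f] + λ² ‖Df‖_∞ / 2`, and Chernoff's bound
with `λ = t / ‖Df‖_∞` gives the tail estimate.
-/

open Function

lemma exp_neg_le_one_sub_add_sq_div_two {u : ℝ} (hu : 0 ≤ u) :
    exp (-u) ≤ 1 - u + u ^ 2 / 2 := by
  have h := Real.sum_le_exp_of_nonneg hu 3
  simp only [Finset.sum_range_succ, Finset.sum_range_zero] at h
  norm_num [Nat.factorial] at h
  rw [exp_neg, inv_le_iff_one_le_mul₀ (exp_pos u)]
  nlinarith [sq_nonneg (u - 1), sq_nonneg u]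

lemma mul_add_sub_exp_le_mul_log {m : ℝ} (hm : 0 < m) (c : ℝ) :
    m * c + m - exp c ≤ m * log m := by
  have h := mul_le_mul_of_nonneg_left (add_one_le_exp (c - log m)) hm.le
  rw [exp_sub, exp_log hm, mul_div_cancel₀ _ hm.ne'] at h
  linarith

lemma exp_mul_mem_Icc {y C l : ℝ} (hy : |y| ≤ C) (hl : 0 ≤ l) :
    exp (l * y) ∈ Set.Icc (exp (-(l * C))) (exp (l * C)) :=
  ⟨exp_le_exp.2 (by linarith [mul_le_mul_of_nonneg_left (abs_le.1 hy).1 hl]),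
    exp_le_exp.2 (mul_le_mul_of_nonneg_left (abs_le.1 hy).2 hl)⟩

section BoundedFunctions
variable {α : Type*} [MeasurableSpace α] {ν : Measure α}

lemma integrable_comp_of_mem_Icc [IsFiniteMeasure ν] {g : α → ℝ} (hg : Measurable g) {a b : ℝ}
    (hab : ∀ x, g x ∈ Set.Icc a b) {φ : ℝ → ℝ} (hφ : Measurable φ)
    (hφc : ContinuousOn φ (Set.Icc a b)) :
    Integrable (fun x => φ (g x)) ν := by
  obtain ⟨C, hC⟩ := isCompact_Icc.exists_bound_of_continuousOn hφc
  exact .of_bound (hφ.comp hg).aestronglyMeasurable C (ae_of_all _ fun x => hC _ (hab x))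

lemma integral_mem_Icc [IsProbabilityMeasure ν] {g : α → ℝ} (hg : Integrable g ν) {a b : ℝ}
    (hab : ∀ x, g x ∈ Set.Icc a b) :
    ∫ x, g x ∂ν ∈ Set.Icc a b :=
  ⟨by simpa using integral_mono (integrable_const a) hg fun x => (hab x).1,
    by simpa using integral_mono hg (integrable_const b) fun x => (hab x).2⟩

lemma integrable_mul_log_sub_log [IsFiniteMeasure ν] {U V W : α → ℝ} (hU : Measurable U)
    (hV : Measurable V) (hW : Measurable W) {c M : ℝ} (hc : 0 < c)
    (hUb : ∀ x, U x ∈ Set.Icc c M) (hVb : ∀ x, V x ∈ Set.Icc c M)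
    (hWb : ∀ x, W x ∈ Set.Icc c M) :
    Integrable (fun x => U x * (log (V x) - log (W x))) ν := by
  have hlog : ContinuousOn log (Set.Icc c M) :=
    continuousOn_log.mono fun _ hx => (hc.trans_le hx.1).ne'
  refine Integrable.bdd_mul (c := M) ?_ hU.aestronglyMeasurable (ae_of_all _ fun x => ?_)
  · exact (integrable_comp_of_mem_Icc hV hVb measurable_log hlog).sub
      (integrable_comp_of_mem_Icc hW hWb measurable_log hlog)
  · rw [Real.norm_of_nonneg (hc.le.trans (hUb x).1)]
    exact (hUb x).2

lemma integrable_exp_mul_of_forall_abs_le [IsFiniteMeasure ν] {Y : α → ℝ} (hY : Measurable Y)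
    {C : ℝ} (hC : ∀ x, |Y x| ≤ C) (t : ℝ) : Integrable (fun x => exp (t * Y x)) ν :=
  ProbabilityTheory.integrable_exp_mul_of_mem_Icc hY.aemeasurable
    (ae_of_all _ fun x => abs_le.1 (hC x))

end BoundedFunctions

section Entropy
variable {α : Type*} [MeasurableSpace α] {ν : Measure α}

noncomputable def entropy (ν : Measure α) (g : α → ℝ) : ℝ :=
  ∫ x, g x * log (g x) ∂ν - (∫ x, g x ∂ν) * log (∫ x, g x ∂ν)

variable [IsProbabilityMeasure ν]

lemma integral_mul_log_sub_log_integral_le_entropy {U W : α → ℝ} (hU : Measurable U)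
    (hW : Measurable W) {c M : ℝ} (hc : 0 < c) (hUb : ∀ x, U x ∈ Set.Icc c M)
    (hWb : ∀ x, W x ∈ Set.Icc c M) :
    ∫ x, U x * (log (W x) - log (∫ y, W y ∂ν)) ∂ν ≤ entropy ν U := by
  have hUi : Integrable U ν := .of_mem_Icc _ _ hU.aemeasurable (ae_of_all _ hUb)
  have hWi : Integrable W ν := .of_mem_Icc _ _ hW.aemeasurable (ae_of_all _ hWb)
  have hUlogU : Integrable (fun x => U x * log (U x)) ν :=
    integrable_comp_of_mem_Icc hU hUb (by fun_prop) continuous_mul_log.continuousOn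
  set mU := ∫ x, U x ∂ν
  set mW := ∫ x, W x ∂ν
  have hmU : 0 < mU := hc.trans_le (integral_mem_Icc hUi hUb).1
  have hmW : 0 < mW := hc.trans_le (integral_mem_Icc hWi hWb).1
  -- `log z ≤ z - 1` at `z = W mU / (mW U)`
  have hpt : ∀ x, U x * (log (W x) - log mW)
      ≤ U x * log (U x) - U x * log mU + mU / mW * W x - U x := by
    intro x
    have hUx : 0 < U x := hc.trans_le (hUb x).1
    have hWx : 0 < W x := hc.trans_le (hWb x).1
    have h := log_le_sub_one_of_pos (show 0 < W x * mU / (mW * U x) by positivity)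
    rw [log_div (by positivity) (by positivity), log_mul hWx.ne' hmU.ne',
      log_mul hmW.ne' hUx.ne'] at h
    have hU_mul : U x * (W x * mU / (mW * U x) - 1) = mU / mW * W x - U x := by
      field_simp
    nlinarith [mul_le_mul_of_nonneg_left h hUx.le]
  have hmono : ∫ x, U x * (log (W x) - log mW) ∂ν
      ≤ ∫ x, (U x * log (U x) - U x * log mU + mU / mW * W x - U x) ∂ν :=
    integral_mono (integrable_mul_log_sub_log hU hW measurable_const hc hUb hWb
      fun _ => integral_mem_Icc hWi hWb)
      (((hUlogU.sub (hUi.mul_const _)).add (hWi.const_mul _)).sub hUi) hpt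
  rw [integral_sub, integral_add, integral_sub, integral_mul_const, integral_const_mul] at hmono
  all_goals try fun_prop
  rw [div_mul_cancel₀ _ hmW.ne'] at hmono
  unfold entropy
  linarith

lemma entropy_exp_mul_le {X : α → ℝ} (hX : Measurable X) {M : ℝ} (hM : ∀ y, |X y| ≤ M)
    {a : ℝ} (ha : ∀ᵐ y ∂ν, a ≤ X y) {l : ℝ} (hl : 0 ≤ l) :
    entropy ν (fun y => exp (l * X y))
      ≤ l ^ 2 / 2 * ∫ y, (X y - a) ^ 2 * exp (l * X y) ∂ν := by
  have hint : ∀ φ : ℝ → ℝ, Continuous φ → Integrable (fun y => φ (X y)) ν := fun φ hφ =>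
    integrable_comp_of_mem_Icc hX (fun y => abs_le.1 (hM y)) hφ.measurable hφ.continuousOn
  have hE : Integrable (fun y => exp (l * X y)) ν := hint (fun t => exp (l * t)) (by fun_prop)
  have hXE : Integrable (fun y => l * X y * exp (l * X y)) ν :=
    hint (fun t => l * t * exp (l * t)) (by fun_prop)
  have hQ : Integrable (fun y => (X y - a) ^ 2 * exp (l * X y)) ν :=
    hint (fun t => (t - a) ^ 2 * exp (l * t)) (by fun_prop)
  -- `Ent(U) ≤ E[U log (U / u) - U + u]` for every `u > 0`; take `u = e^{l a}`
  have hpt : ∀ᵐ y ∂ν, l * X y * exp (l * X y) - l * a * exp (l * X y) - exp (l * X y)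
      + exp (l * a) ≤ l ^ 2 / 2 * ((X y - a) ^ 2 * exp (l * X y)) := by
    filter_upwards [ha] with y hy
    have hu : 0 ≤ l * (X y - a) := mul_nonneg hl (by linarith)
    have h := mul_le_mul_of_nonneg_left (exp_neg_le_one_sub_add_sq_div_two hu)
      (exp_pos (l * X y)).le
    rw [← exp_add, show l * X y + -(l * (X y - a)) = l * a by ring] at h
    nlinarith [exp_pos (l * X y)]
  have hmono : ∫ y, (l * X y * exp (l * X y) - l * a * exp (l * X y) - exp (l * X y)
      + exp (l * a)) ∂ν ≤ ∫ y, l ^ 2 / 2 * ((X y - a) ^ 2 * exp (l * X y)) ∂ν :=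
    integral_mono_ae (((hXE.sub (hE.const_mul _)).sub hE).add (integrable_const _))
      (hQ.const_mul _) hpt
  rw [integral_add, integral_sub, integral_sub, integral_const_mul, integral_const_mul,
    integral_const] at hmono
  all_goals try fun_prop
  simp only [probReal_univ, smul_eq_mul, one_mul] at hmono
  have hlog : ∫ y, exp (l * X y) * log (exp (l * X y)) ∂ν = ∫ y, l * X y * exp (l * X y) ∂ν := by
    simp only [log_exp, mul_comm]
  unfold entropy
  rw [hlog]
  linarith [mul_add_sub_exp_le_mul_log (integral_exp_pos hE) (l * a)]

end Entropy

section Update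
variable {ι : Type*} [DecidableEq ι] {X : ι → Type*}

lemma preimage_update_univ_pi (k : ι) (s : ∀ i, Set (X i)) :
    (fun p : (∀ i, X i) × X k => update p.1 k p.2) ⁻¹' Set.univ.pi s
      = Set.univ.pi (update s k Set.univ) ×ˢ s k := by
  ext ⟨x, y⟩
  simp only [Set.mem_preimage, Set.mem_univ_pi, Set.mem_prod]
  constructor
  · intro h
    refine ⟨fun i => ?_, by simpa using h k⟩
    rcases eq_or_ne i k with rfl | hik
    · simp
    · simpa [hik] using h i
  · rintro ⟨h, hy⟩ i
    rcases eq_or_ne i k with rfl | hik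
    · simpa using hy
    · simpa [hik] using h i

lemma eq_of_forall_update_eq [Finite ι] {β : Type*} {g : (∀ i, X i) → β}
    (hg : ∀ k x y, g (update x k y) = g x) (x x' : ∀ i, X i) : g x = g x' := by
  have := Fintype.ofFinite ι
  have key : ∀ s : Finset ι, g (s.piecewise x' x) = g x := by
    intro s
    induction s using Finset.induction with
    | empty => simp
    | insert _ _ _ ih => rw [Finset.piecewise_insert, hg, ih]
  simpa using (key Finset.univ).symm

end Update

section ProductMeasure
variable {ι : Type*} [Fintype ι] [DecidableEq ι] {X : ι → Type*} [∀ i, MeasurableSpace (X i)]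
  (μ : ∀ i, Measure (X i)) [∀ i, IsProbabilityMeasure (μ i)]

lemma measurePreserving_update (k : ι) :
    MeasurePreserving (fun p : (∀ i, X i) × X k => update p.1 k p.2)
      ((Measure.pi μ).prod (μ k)) (Measure.pi μ) := by
  refine ⟨measurable_update', (Measure.pi_eq fun s hs => ?_).symm⟩
  rw [Measure.map_apply measurable_update' (MeasurableSet.univ_pi hs),
    preimage_update_univ_pi, Measure.prod_prod, Measure.pi_pi,
    ← Finset.mul_prod_erase _ _ (Finset.mem_univ k),
    ← Finset.mul_prod_erase _ _ (Finset.mem_univ k)]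
  simp only [update_self, measure_univ, one_mul]
  rw [mul_comm]
  congr 1
  exact Finset.prod_congr rfl fun i hi => by rw [update_of_ne (Finset.ne_of_mem_erase hi)]

lemma integral_integral_update {g : (∀ i, X i) → ℝ} (hg : Integrable g (Measure.pi μ)) (k : ι) :
    ∫ x, ∫ y, g (update x k y) ∂μ k ∂Measure.pi μ = ∫ x, g x ∂Measure.pi μ := by
  have hmp := measurePreserving_update μ k
  calc _ = ∫ p, g (update p.1 k p.2) ∂(Measure.pi μ).prod (μ k) :=
        (integral_prod _ ((hmp.integrable_comp hg.aestronglyMeasurable).2 hg)).symm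
    _ = ∫ x, g x ∂((Measure.pi μ).prod (μ k)).map fun p => update p.1 k p.2 :=
        (integral_map hmp.measurable.aemeasurable (by rw [hmp.map_eq]; exact hg.1)).symm
    _ = _ := by rw [hmp.map_eq]

lemma MeasureTheory.Integrable.integral_update {g : (∀ i, X i) → ℝ}
    (hg : Integrable g (Measure.pi μ)) (k : ι) :
    Integrable (fun x => ∫ y, g (update x k y) ∂μ k) (Measure.pi μ) :=
  ((measurePreserving_update μ k).integrable_comp hg.aestronglyMeasurable).2 hg
    |>.integral_prod_left

omit [Fintype ι] in
lemma Measurable.integral_update {g : (∀ i, X i) → ℝ} (hg : Measurable g) (k : ι) :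
    Measurable (fun x => ∫ y, g (update x k y) ∂μ k) :=
  (hg.comp measurable_update').stronglyMeasurable.integral_prod_right'.measurable

lemma ae_of_forall_ae_update {P : (∀ i, X i) → Prop} (hP : MeasurableSet {x | P x}) (k : ι)
    (h : ∀ x, ∀ᵐ y ∂μ k, P (update x k y)) : ∀ᵐ x ∂Measure.pi μ, P x := by
  have hmp := measurePreserving_update μ k
  rw [← hmp.map_eq, ae_map_iff hmp.measurable.aemeasurable hP]
  exact (Measure.ae_prod_iff_ae_ae (p := fun p => P (update p.1 k p.2)) (hmp.measurable hP)).2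
    (ae_of_all _ h)

end ProductMeasure

section Tensorization
variable {ι : Type*} [Fintype ι] [DecidableEq ι] {X : ι → Type*} [∀ i, MeasurableSpace (X i)]
  {μ : ∀ i, Measure (X i)} [∀ i, IsProbabilityMeasure (μ i)]
  {U : (∀ i, X i) → ℝ} {c M : ℝ}

omit [Fintype ι] in
lemma integral_update_mem_Icc {V : (∀ i, X i) → ℝ} (hV : Measurable V)
    (hVb : ∀ x, V x ∈ Set.Icc c M) (k : ι) (x : ∀ i, X i) :
    ∫ y, V (update x k y) ∂μ k ∈ Set.Icc c M :=
  integral_mem_Icc (Integrable.of_mem_Icc _ _ (hV.comp (measurable_update x)).aemeasurable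
    (ae_of_all _ fun _ => hVb _)) fun _ => hVb _

lemma integrable_entropy_update (hU : Measurable U) (hUb : ∀ x, U x ∈ Set.Icc c M) (k : ι) :
    Integrable (fun x => entropy (μ k) fun y => U (update x k y)) (Measure.pi μ) :=
  (Integrable.integral_update μ (integrable_comp_of_mem_Icc hU hUb (by fun_prop)
    continuous_mul_log.continuousOn) k).sub
    (integrable_comp_of_mem_Icc (hU.integral_update μ k) (integral_update_mem_Icc hU hUb k)
      (by fun_prop) continuous_mul_log.continuousOn)

lemma integral_mul_log_sub_log_integral_update_le {V : (∀ i, X i) → ℝ} (hU : Measurable U)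
    (hV : Measurable V) (hc : 0 < c) (hUb : ∀ x, U x ∈ Set.Icc c M)
    (hVb : ∀ x, V x ∈ Set.Icc c M) (k : ι) :
    ∫ x, U x * (log (V x) - log (∫ y, V (update x k y) ∂μ k)) ∂Measure.pi μ
      ≤ ∫ x, entropy (μ k) (fun y => U (update x k y)) ∂Measure.pi μ := by
  have hint := integrable_mul_log_sub_log (ν := Measure.pi μ) hU hV (hV.integral_update μ k) hc
    hUb hVb (integral_update_mem_Icc hV hVb k)
  rw [← integral_integral_update μ hint k]
  simp only [update_idem]
  refine integral_mono (by simpa only [update_idem] using hint.integral_update μ k)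
    (integrable_entropy_update hU hUb k) fun x => ?_
  exact
    integral_mul_log_sub_log_integral_le_entropy (hU.comp (measurable_update x))
      (hV.comp (measurable_update x)) hc (fun _ => hUb _) (fun _ => hVb _)

/-- `V` is `U` averaged over the coordinates in `s`. -/
lemma exists_average_integral_mul_log_sub_log_le (hU : Measurable U) (hc : 0 < c)
    (hUb : ∀ x, U x ∈ Set.Icc c M) (s : Finset ι) :
    ∃ V : (∀ i, X i) → ℝ, Measurable V ∧ (∀ x, V x ∈ Set.Icc c M) ∧
      (∀ k ∈ s, ∀ x y, V (update x k y) = V x) ∧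
      ∫ x, V x ∂Measure.pi μ = ∫ x, U x ∂Measure.pi μ ∧
      ∫ x, U x * (log (U x) - log (V x)) ∂Measure.pi μ
        ≤ ∑ k ∈ s, ∫ x, entropy (μ k) (fun y => U (update x k y)) ∂Measure.pi μ := by
  induction s using Finset.induction with
  | empty => exact ⟨U, hU, hUb, by simp, rfl, by simp⟩
  | insert k s hks ih =>
    obtain ⟨V, hV, hVb, hVinv, hVint, hVent⟩ := ih
    have hV' := integral_update_mem_Icc (μ := μ) hV hVb k
    refine ⟨fun x => ∫ y, V (update x k y) ∂μ k, hV.integral_update μ k, hV', ?_, ?_, ?_⟩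
    · intro i hi x z
      rcases Finset.mem_insert.1 hi with rfl | hi
      · simp only [update_idem]
      · simp only [update_comm (ne_of_mem_of_not_mem hi hks), hVinv i hi]
    · rw [integral_integral_update μ
        (.of_mem_Icc _ _ hV.aemeasurable (ae_of_all _ hVb)) k, hVint]
    · have hsplit : ∀ x, U x * (log (U x) - log (∫ y, V (update x k y) ∂μ k))
          = U x * (log (U x) - log (V x))
            + U x * (log (V x) - log (∫ y, V (update x k y) ∂μ k)) := fun x => by ring
      rw [Finset.sum_insert hks, integral_congr_ae (ae_of_all _ hsplit),
        integral_add (integrable_mul_log_sub_log hU hU hV hc hUb hUb hVb)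
          (integrable_mul_log_sub_log hU hV (hV.integral_update μ k) hc hUb hVb hV')]
      linarith [integral_mul_log_sub_log_integral_update_le (μ := μ) hU hV hc hUb hVb k]

theorem entropy_pi_le_sum_integral_entropy (hU : Measurable U) (hc : 0 < c)
    (hUb : ∀ x, U x ∈ Set.Icc c M) :
    entropy (Measure.pi μ) U
      ≤ ∑ k, ∫ x, entropy (μ k) (fun y => U (update x k y)) ∂Measure.pi μ := by
  obtain ⟨V, -, -, hVinv, hVint, hVent⟩ :=
    exists_average_integral_mul_log_sub_log_le (μ := μ) hU hc hUb Finset.univ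
  have hVconst : ∀ x, V x = ∫ x, U x ∂Measure.pi μ := by
    intro x
    have hconst := eq_of_forall_update_eq fun k => hVinv k (Finset.mem_univ k)
    rw [← hVint, integral_congr_ae (ae_of_all _ fun x' => hconst x' x)]
    simp
  simp only [hVconst, mul_sub] at hVent
  rwa [integral_sub (integrable_comp_of_mem_Icc hU hUb (by fun_prop)
    continuous_mul_log.continuousOn)
    ((Integrable.of_mem_Icc _ _ hU.aemeasurable (ae_of_all _ hUb)).mul_const _),
    integral_mul_const] at hVent

end Tensorization

lemma measurable_essInf {α β : Type*} [MeasurableSpace α] [MeasurableSpace β] {ν : Measure β}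
    [SFinite ν] [NeZero ν] {g : α → β → ℝ} (hg : Measurable (uncurry g)) {C : ℝ}
    (hC : ∀ x y, |g x y| ≤ C) : Measurable fun x => essInf (g x) ν := by
  refine measurable_of_Ioi fun c => ?_
  have hset : (fun x => essInf (g x) ν) ⁻¹' Set.Ioi c
      = ⋃ q : ℚ, {x | c < q ∧ ν {y | g x y < q} = 0} := by
    ext x
    simp only [Set.mem_preimage, Set.mem_Ioi, Set.mem_iUnion, Set.mem_ofPred_eq]
    constructor
    · intro hcx
      obtain ⟨q, hcq, hqx⟩ := exists_rat_btwn hcx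
      have hq := ae_lt_of_lt_essInf hqx
        (Filter.isBoundedUnder_of ⟨-C, fun y => neg_le_of_abs_le (hC x y)⟩)
      exact ⟨q, hcq, measure_mono_null (fun y hy => not_lt.2 (le_of_lt hy)) (ae_iff.1 hq)⟩
    · rintro ⟨q, hcq, hq⟩
      refine hcq.trans_le (le_essInf_of_ae_le _ ?_ ?_)
      · exact ae_iff.2 (by simpa only [not_le] using hq)
      · exact Filter.isCoboundedUnder_ge_of_le _ fun y => le_of_abs_le (hC x y)
  rw [hset]
  refine .iUnion fun q => (MeasurableSet.const _).inter ?_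
  have : Measurable fun x => ν {y | g x y < q} :=
    measurable_measure_prodMk_left (measurableSet_lt hg measurable_const)
  exact this (measurableSet_singleton 0)

section CondEssInf
variable {ι : Type*} [DecidableEq ι] {X : ι → Type*} [∀ i, MeasurableSpace (X i)]
  (μ : ∀ i, Measure (X i))

/-- Stands in for `condInfK`, which need not be measurable. -/
noncomputable def condEssInfK (k : ι) (f : (∀ i, X i) → ℝ) (x : ∀ i, X i) : ℝ :=
  essInf (fun y => f (update x k y)) (μ k)

variable {μ} {k : ι} {f : (∀ i, X i) → ℝ} {C : ℝ}

lemma condEssInfK_update (x : ∀ i, X i) (y : X k) :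
    condEssInfK μ k f (update x k y) = condEssInfK μ k f x := by
  simp [condEssInfK]

lemma ae_condEssInfK_le (hC : ∀ x, |f x| ≤ C) (x : ∀ i, X i) :
    ∀ᵐ y ∂μ k, condEssInfK μ k f x ≤ f (update x k y) :=
  ae_essInf_le (Filter.isBoundedUnder_of ⟨-C, fun _ => neg_le_of_abs_le (hC _)⟩)

variable [∀ i, IsProbabilityMeasure (μ i)]

lemma condEssInfK_mem_Icc (hC : ∀ x, |f x| ≤ C) (x : ∀ i, X i) :
    condEssInfK μ k f x ∈ Set.Icc (-C) C := by
  refine ⟨le_essInf_of_ae_le _ (ae_of_all _ fun _ => neg_le_of_abs_le (hC _))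
    (Filter.isCoboundedUnder_ge_of_le _ fun _ => le_of_abs_le (hC _)), ?_⟩
  obtain ⟨y, hy⟩ := (ae_condEssInfK_le (μ := μ) hC x).exists
  exact hy.trans (le_of_abs_le (hC _))

lemma measurable_condEssInfK (hf : Measurable f) (hC : ∀ x, |f x| ≤ C) :
    Measurable (condEssInfK μ k f) :=
  measurable_essInf (g := fun x y => f (update x k y)) (hf.comp measurable_update')
    fun _ _ => hC _

variable [Fintype ι]

lemma condEssInfK_ae_le (hf : Measurable f) (hC : ∀ x, |f x| ≤ C) :
    ∀ᵐ x ∂Measure.pi μ, condEssInfK μ k f x ≤ f x :=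
  ae_of_forall_ae_update μ (measurableSet_le (measurable_condEssInfK hf hC) hf) k fun x => by
    simpa only [condEssInfK_update] using ae_condEssInfK_le (μ := μ) hC x

lemma integrable_sub_condEssInfK_sq_mul_exp (hf : Measurable f) (hC : ∀ x, |f x| ≤ C) (l : ℝ) :
    Integrable (fun x => (f x - condEssInfK μ k f x) ^ 2 * exp (l * f x)) (Measure.pi μ) := by
  refine Integrable.bdd_mul (c := (2 * C) ^ 2) ?_
    ((hf.sub (measurable_condEssInfK hf hC)).pow_const 2).aestronglyMeasurable
    (ae_of_all _ fun x => ?_)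
  · exact integrable_exp_mul_of_forall_abs_le hf hC l
  · have hb := condEssInfK_mem_Icc (μ := μ) (k := k) hC x
    have hfx := abs_le.1 (hC x)
    rw [Real.norm_eq_abs, abs_pow, sq_abs]
    exact sq_le_sq' (by linarith [hb.2, hfx.1]) (by linarith [hb.1, hfx.2])

lemma integral_entropy_update_exp_mul_le (hf : Measurable f) (hC : ∀ x, |f x| ≤ C) {l : ℝ}
    (hl : 0 ≤ l) :
    ∫ x, entropy (μ k) (fun y => exp (l * f (update x k y))) ∂Measure.pi μ
      ≤ l ^ 2 / 2 * ∫ x, (f x - condEssInfK μ k f x) ^ 2 * exp (l * f x) ∂Measure.pi μ := by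
  have hG := integrable_sub_condEssInfK_sq_mul_exp (μ := μ) (k := k) hf hC l
  rw [← integral_integral_update μ hG k, ← integral_const_mul]
  refine integral_mono (integrable_entropy_update (hf.const_mul l).exp
    (fun x => exp_mul_mem_Icc (hC x) hl) k) ((hG.integral_update μ k).const_mul _) fun x => ?_
  simp only [condEssInfK_update]
  exact entropy_exp_mul_le (hf.comp (measurable_update x)) (fun _ => hC _)
    (ae_condEssInfK_le hC x) hl

end CondEssInf

open Filter Topology in
lemma le_mul_deriv_zero_add_of_mul_deriv_sub_le {K : ℝ → ℝ} (hK : Differentiable ℝ K)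
    (hK0 : K 0 = 0) {a : ℝ} (h : ∀ s > 0, s * deriv K s - K s ≤ a * s ^ 2 / 2) {l : ℝ}
    (hl : 0 < l) : K l ≤ l * deriv K 0 + a * l ^ 2 / 2 := by
  set g : ℝ → ℝ := fun s => K s / s - a / 2 * s
  have hg : ∀ s > 0, HasDerivAt g ((deriv K s * s - K s * 1) / s ^ 2 - a / 2 * 1) s := fun s hs =>
    ((hK s).hasDerivAt.div (hasDerivAt_id s) hs.ne').sub ((hasDerivAt_id s).const_mul (a / 2))
  have hanti : AntitoneOn g (Set.Ioi 0) := by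
    refine antitoneOn_of_deriv_nonpos (convex_Ioi 0)
      (fun s hs => (hg s hs).continuousAt.continuousWithinAt)
      (fun s hs => (hg s (interior_subset hs)).differentiableAt.differentiableWithinAt)
      fun s hs => ?_
    have hs : 0 < s := interior_subset hs
    rw [(hg s hs).deriv, sub_nonpos, div_le_iff₀ (by positivity)]
    nlinarith [h s hs]
  have hlim : Tendsto g (𝓝[>] 0) (𝓝 (deriv K 0)) := by
    have hslope := (hK 0).hasDerivAt.tendsto_slope_zero_right
    have hlin : Tendsto (fun s : ℝ => a / 2 * s) (𝓝[>] 0) (𝓝 0) := by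
      simpa using ((continuous_const.mul continuous_id).tendsto (0 : ℝ)).mono_left
        nhdsWithin_le_nhds (f := fun s : ℝ => a / 2 * s)
    simpa [g, hK0, div_eq_inv_mul] using hslope.sub hlin
  have hgl : K l / l - a / 2 * l ≤ deriv K 0 := by
    refine ge_of_tendsto hlim ?_
    filter_upwards [Ioc_mem_nhdsGT hl] with s hs
    exact hanti hs.1 (hs.1.trans_le hs.2) hs.2
  rw [sub_le_iff_le_add, div_le_iff₀ hl] at hgl
  linarith

open ProbabilityTheory in
lemma cgf_le_of_entropy_exp_mul_le {α : Type*} [MeasurableSpace α] {ν : Measure α}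
    [IsProbabilityMeasure ν] {Y : α → ℝ} (hY : Measurable Y) {C : ℝ} (hC : ∀ ω, |Y ω| ≤ C)
    {a : ℝ} (hent : ∀ s > 0,
      entropy ν (fun ω => exp (s * Y ω)) ≤ s ^ 2 / 2 * a * ∫ ω, exp (s * Y ω) ∂ν)
    {l : ℝ} (hl : 0 < l) : cgf Y ν l ≤ l * ∫ ω, Y ω ∂ν + a * l ^ 2 / 2 := by
  have hint := integrable_exp_mul_of_forall_abs_le (ν := ν) hY hC
  have hmem : ∀ t, t ∈ interior (integrableExpSet Y ν) := fun t => by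
    simp [integrableExpSet, hint]
  have hdiff : Differentiable ℝ (cgf Y ν) := fun s => (analyticAt_cgf (hmem s)).differentiableAt
  have hderiv0 : deriv (cgf Y ν) 0 = ∫ ω, Y ω ∂ν := by simp [deriv_cgf_zero (hmem 0)]
  rw [← hderiv0]
  refine le_mul_deriv_zero_add_of_mul_deriv_sub_le hdiff cgf_zero (fun s hs => ?_) hl
  have hZ : 0 < mgf Y ν s := mgf_pos (hint s)
  have hent' : entropy ν (fun ω => exp (s * Y ω))
      = s * ∫ ω, Y ω * exp (s * Y ω) ∂ν - mgf Y ν s * log (mgf Y ν s) := by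
    simp only [entropy, log_exp, ← integral_const_mul, mgf]
    congr 2 with ω
    ring
  have hbound := hent s hs
  rw [hent'] at hbound
  rw [deriv_cgf (hmem s), cgf, mul_div_assoc', sub_le_iff_le_add, div_le_iff₀ hZ]
  simp only [mgf] at hbound ⊢
  linarith

section WorstCaseProxy
variable {n : ℕ} {Ω : Fin n → Type*} [∀ k, MeasurableSpace (Ω k)] {μ : ∀ k, Measure (Ω k)}
  [∀ k, IsProbabilityMeasure (μ k)] {f : (∀ i, Ω i) → ℝ} {C : ℝ}

omit [∀ k, MeasurableSpace (Ω k)] in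
lemma sub_condInfK_mem_Icc (hC : ∀ x, |f x| ≤ C) (k : Fin n) (x : ∀ i, Ω i) :
    f x - condInfK k f x ∈ Set.Icc 0 (2 * C) := by
  have hbdd : BddBelow (Set.range fun y => f (update x k y)) :=
    ⟨-C, by rintro _ ⟨y, rfl⟩; exact neg_le_of_abs_le (hC _)⟩
  have hle : condInfK k f x ≤ f x := by
    simpa [condInfK] using ciInf_le hbdd (x k)
  have hge : -C ≤ condInfK k f x :=
    have : Nonempty (Ω k) := ⟨x k⟩
    le_ciInf fun _ => neg_le_of_abs_le (hC _)
  constructor <;> linarith [le_of_abs_le (hC x)]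

omit [∀ k, MeasurableSpace (Ω k)] in
lemma Dproxy_le (hC : ∀ x, |f x| ≤ C) (x : ∀ i, Ω i) : Dproxy f x ≤ n * (2 * C) ^ 2 := by
  simpa [Dproxy] using Finset.sum_le_sum fun k (_ : k ∈ Finset.univ) =>
    pow_le_pow_left₀ (sub_condInfK_mem_Icc hC k x).1 (sub_condInfK_mem_Icc hC k x).2 2

lemma condInfK_le_condEssInfK (hC : ∀ x, |f x| ≤ C) (k : Fin n) (x : ∀ i, Ω i) :
    condInfK k f x ≤ condEssInfK μ k f x :=
  le_essInf_of_ae_le _ (ae_of_all _ fun y => ciInf_le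
    ⟨-C, by rintro _ ⟨y, rfl⟩; exact neg_le_of_abs_le (hC _)⟩ y)
    (Filter.isCoboundedUnder_ge_of_le _ fun _ => le_of_abs_le (hC _))

lemma entropy_exp_mul_le_of_ae_Dproxy_le (hf : Measurable f) (hC : ∀ x, |f x| ≤ C) {a : ℝ}
    (ha : ∀ᵐ x ∂Measure.pi μ, Dproxy f x ≤ a) {l : ℝ} (hl : 0 ≤ l) :
    entropy (Measure.pi μ) (fun x => exp (l * f x))
      ≤ l ^ 2 / 2 * a * ∫ x, exp (l * f x) ∂Measure.pi μ := by
  have hG := fun k => integrable_sub_condEssInfK_sq_mul_exp (μ := μ) (k := k) hf hC l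
  have hsum : ∀ᵐ x ∂Measure.pi μ, ∑ k, (f x - condEssInfK μ k f x) ^ 2 * exp (l * f x)
      ≤ a * exp (l * f x) := by
    filter_upwards [ha, ae_all_iff.2 fun k => condEssInfK_ae_le (μ := μ) (k := k) hf hC]
      with x hDx hbx
    rw [← Finset.sum_mul]
    refine mul_le_mul_of_nonneg_right (le_trans (Finset.sum_le_sum fun k _ => ?_) hDx)
      (exp_pos _).le
    exact pow_le_pow_left₀ (sub_nonneg.2 (hbx k))
      (sub_le_sub_left (condInfK_le_condEssInfK hC k x) _) 2
  calc entropy (Measure.pi μ) (fun x => exp (l * f x))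
      ≤ ∑ k, ∫ x, entropy (μ k) (fun y => exp (l * f (update x k y))) ∂Measure.pi μ :=
        entropy_pi_le_sum_integral_entropy (hf.const_mul l).exp (exp_pos _)
          fun x => exp_mul_mem_Icc (hC x) hl
    _ ≤ ∑ k, l ^ 2 / 2 * ∫ x, (f x - condEssInfK μ k f x) ^ 2 * exp (l * f x) ∂Measure.pi μ :=
        Finset.sum_le_sum fun k _ => integral_entropy_update_exp_mul_le hf hC hl
    _ = l ^ 2 / 2 * ∫ x, ∑ k, (f x - condEssInfK μ k f x) ^ 2 * exp (l * f x) ∂Measure.pi μ := by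
        rw [← Finset.mul_sum, integral_finsetSum _ fun k _ => hG k]
    _ ≤ l ^ 2 / 2 * ∫ x, a * exp (l * f x) ∂Measure.pi μ :=
        mul_le_mul_of_nonneg_left (integral_mono_ae (integrable_finsetSum _ fun k _ => hG k)
          ((integrable_exp_mul_of_forall_abs_le hf hC l).const_mul a) hsum) (by positivity)
    _ = l ^ 2 / 2 * a * ∫ x, exp (l * f x) ∂Measure.pi μ := by
        rw [integral_const_mul, mul_assoc]

end WorstCaseProxy

section Statements

variable {n : ℕ} {Ω : Fin n → Type*} [∀ k, MeasurableSpace (Ω k)]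

/-- Upper tail bound via the worst-case variance proxy. -/
theorem stmt_17 (μ : ∀ k, Measure (Ω k)) [∀ k, IsProbabilityMeasure (μ k)]
    (f : (∀ i, Ω i) → ℝ) (hf : Measurable f) (C : ℝ) (hC : ∀ x, |f x| ≤ C)
    (t : ℝ) (ht : 0 < t) :
    ((Measure.pi μ) {x | f x - ∫ y, f y ∂(Measure.pi μ) > t}).toReal
      ≤ Real.exp (-t ^ 2 / (2 * essSup (Dproxy f) (Measure.pi μ))) := by
  set m := ∫ y, f y ∂(Measure.pi μ)
  set v := essSup (Dproxy f) (Measure.pi μ)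
  rcases le_or_gt v 0 with hv | hv
  · calc _ ≤ 1 := measureReal_le_one
      _ ≤ _ := one_le_exp (div_nonneg_of_nonpos (neg_nonpos.2 (sq_nonneg t)) (by linarith))
  have hD : ∀ᵐ x ∂Measure.pi μ, Dproxy f x ≤ v :=
    ae_le_essSup (Filter.isBoundedUnder_of ⟨_, Dproxy_le hC⟩)
  have hl : 0 < t / v := div_pos ht hv
  have hcgf := cgf_le_of_entropy_exp_mul_le hf hC
    (fun s hs => entropy_exp_mul_le_of_ae_Dproxy_le hf hC hD hs.le) hl
  calc _ ≤ (Measure.pi μ).real {x | m + t ≤ f x} :=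
        measureReal_mono fun x (hx : f x - m > t) => show m + t ≤ f x by linarith
    _ ≤ exp (-(t / v) * (m + t) + ProbabilityTheory.cgf f (Measure.pi μ) (t / v)) :=
        ProbabilityTheory.measure_ge_le_exp_cgf _ hl.le
          (integrable_exp_mul_of_forall_abs_le hf hC _)
    _ ≤ exp (-(t / v) * (m + t) + (t / v * m + v * (t / v) ^ 2 / 2)) := by gcongr
    _ = exp (-t ^ 2 / (2 * v)) := by
        congr 1
        field_simp
        ring

end Statements
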